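/- For every t ∈ ℕ, the per-iteration descent inequality holds: F(x(t+1)) + (1/2)(1/η − L − √p·L·s)·‖x(t+1) − x(t)‖^2 ≤ F(x(t)) + (√p·L/2)·Σ_{k=(t−s)_+}^{t−1} ‖x(k+1) − x(k)‖^2. -/

import Mathlib

open Filter Topology

noncomputable abbrev EE (p : ℕ) (d : Fin p → ℕ) : Type :=
  PiLp 2 (fun i : Fin p => EuclideanSpace ℝ (Fin (d i)))

/-! With `v = x(t+1) - x(t)`, the descent lemma for the `L`-smooth part gives
`f(x(t+1)) ≤ f(x(t)) + ⟪∇f(x(t)), v⟫ + L/2 ‖v‖²`, and comparing each block's proximal step with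
the candidate `z = x_i(t)` gives `Σ g_i(x_i(t+1)) + ‖v‖²/(2η) + ⟪v, W⟫ ≤ Σ g_i(x_i(t))`, where `W`
collects the stale partial gradients `∇_i f(x^i(t))`. Every local model lies within
`S = Σ_{k=(t-s)_+}^{t-1} ‖x(k+1) - x(k)‖` of `x(t)`, so the staleness error
`⟪∇f(x(t)) - W, v⟫` is at most `√p L S ‖v‖ ≤ √p L (s ‖v‖² + Σ ‖x(k+1) - x(k)‖²) / 2`. -/

open scoped InnerProductSpace

theorem le_add_inner_add_sq_of_lipschitz_gradient {E : Type*} [NormedAddCommGroup E]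
    [InnerProductSpace ℝ E] [CompleteSpace E] {f : E → ℝ} {f' : E → E} {L : ℝ}
    (hf : ∀ y, HasGradientAt f (f' y) y) (hlip : ∀ y z, ‖f' y - f' z‖ ≤ L * ‖y - z‖)
    (x y : E) : f y ≤ f x + ⟪f' x, y - x⟫_ℝ + L / 2 * ‖y - x‖ ^ 2 := by
  set v := y - x
  set φ : ℝ → ℝ := fun u => f (x + u • v) - u * ⟪f' x, v⟫_ℝ - L / 2 * u ^ 2 * ‖v‖ ^ 2
  have hφ : ∀ u, HasDerivAt φ (⟪f' (x + u • v) - f' x, v⟫_ℝ - L * u * ‖v‖ ^ 2) u := by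
    intro u
    have hline : HasDerivAt (fun u : ℝ => x + u • v) v u := by
      simpa using ((hasDerivAt_id u).smul_const v).const_add x
    have hfu : HasDerivAt (fun u : ℝ => f (x + u • v)) ⟪f' (x + u • v), v⟫_ℝ u :=
      (hf _).hasFDerivAt.comp_hasDerivAt u hline
    refine ((hfu.sub ((hasDerivAt_id u).mul_const ⟪f' x, v⟫_ℝ)).sub
      (((hasDerivAt_pow 2 u).const_mul (L / 2)).mul_const (‖v‖ ^ 2))).congr_deriv ?_
    rw [inner_sub_left]
    ring
  have hφ_nonpos : ∀ u ∈ interior (Set.Icc (0 : ℝ) 1),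
      ⟪f' (x + u • v) - f' x, v⟫_ℝ - L * u * ‖v‖ ^ 2 ≤ 0 := by
    intro u hu
    rw [interior_Icc] at hu
    rw [sub_nonpos]
    calc ⟪f' (x + u • v) - f' x, v⟫_ℝ ≤ ‖f' (x + u • v) - f' x‖ * ‖v‖ := real_inner_le_norm _ _
      _ ≤ L * ‖x + u • v - x‖ * ‖v‖ := by gcongr; exact hlip _ _
      _ = L * u * ‖v‖ ^ 2 := by
        rw [add_sub_cancel_left, norm_smul, Real.norm_of_nonneg hu.1.le]; ring
  have hanti : AntitoneOn φ (Set.Icc 0 1) :=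
    antitoneOn_of_hasDerivWithinAt_nonpos (convex_Icc 0 1)
      (fun u _ => (hφ u).continuousAt.continuousWithinAt) (fun u _ => (hφ u).hasDerivWithinAt)
      hφ_nonpos
  have h01 := hanti (Set.left_mem_Icc.2 zero_le_one) (Set.right_mem_Icc.2 zero_le_one) zero_le_one
  simp only [φ, one_smul, zero_smul, add_zero, add_sub_cancel, v] at h01
  linarith

theorem prox_gradient_step_le {E : Type*} [NormedAddCommGroup E] [InnerProductSpace ℝ E]
    {g : E → EReal} {η : ℝ} (hη : 0 < η) {x y w : E}
    (hy : ∀ z, g y + ((1 / (2 * η) * ‖y - (x - η • w)‖ ^ 2 : ℝ) : EReal)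
      ≤ g z + ((1 / (2 * η) * ‖z - (x - η • w)‖ ^ 2 : ℝ) : EReal)) :
    g y + ((1 / (2 * η) * ‖y - x‖ ^ 2 + ⟪y - x, w⟫_ℝ : ℝ) : EReal) ≤ g x := by
  have hsplit : 1 / (2 * η) * ‖y - (x - η • w)‖ ^ 2
      = 1 / (2 * η) * ‖y - x‖ ^ 2 + ⟪y - x, w⟫_ℝ + 1 / (2 * η) * ‖x - (x - η • w)‖ ^ 2 := by
    rw [sub_sub_cancel, show y - (x - η • w) = (y - x) + η • w by abel, norm_add_sq_real,
      real_inner_smul_right]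
    field_simp
  have hx := hy x
  rw [hsplit, EReal.coe_add, ← add_assoc] at hx
  exact (EReal.addLECancellable_coe _).add_le_add_iff_right.1 hx

theorem EReal.coe_finset_sum {ι : Type*} (s : Finset ι) (a : ι → ℝ) :
    ((∑ i ∈ s, a i : ℝ) : EReal) = ∑ i ∈ s, (a i : EReal) :=
  map_sum (⟨⟨Real.toEReal, EReal.coe_zero⟩, EReal.coe_add⟩ : ℝ →+ EReal) a s

theorem PiLp.sum_add_sq_norm_add_inner_le {ι : Type*} [Fintype ι] {β : ι → Type*}
    [∀ i, NormedAddCommGroup (β i)] [∀ i, InnerProductSpace ℝ (β i)]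
    (g : (i : ι) → β i → EReal) (c : ℝ) (x y w : PiLp 2 β)
    (h : ∀ i, g i (y i) + ((c * ‖y i - x i‖ ^ 2 + ⟪y i - x i, w i⟫_ℝ : ℝ) : EReal) ≤ g i (x i)) :
    ∑ i, g i (y i) + ((c * ‖y - x‖ ^ 2 + ⟪y - x, w⟫_ℝ : ℝ) : EReal) ≤ ∑ i, g i (x i) := by
  rw [PiLp.norm_sq_eq_of_L2, PiLp.inner_apply, Finset.mul_sum, ← Finset.sum_add_distrib,
    EReal.coe_finset_sum, ← Finset.sum_add_distrib]
  exact Finset.sum_le_sum fun i _ => by simpa only [PiLp.sub_apply] using h i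

theorem PiLp.norm_le_sqrt_card_mul {ι : Type*} [Fintype ι] {β : ι → Type*}
    [∀ i, SeminormedAddCommGroup (β i)] {c : ℝ} (hc : 0 ≤ c) (a : PiLp 2 β)
    (h : ∀ i, ‖a i‖ ≤ c) : ‖a‖ ≤ √(Fintype.card ι) * c := by
  rw [PiLp.norm_eq_of_L2, ← Real.sqrt_sq hc, ← Real.sqrt_mul (Nat.cast_nonneg _)]
  gcongr
  calc ∑ i, ‖a i‖ ^ 2 ≤ ∑ _i : ι, c ^ 2 := by gcongr with i; exact h i
    _ = _ := by simp

theorem PiLp.norm_sub_toLp_le_of_lipschitz {ι : Type*} [Fintype ι] {β : ι → Type*}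
    [∀ i, SeminormedAddCommGroup (β i)] {G : PiLp 2 β → PiLp 2 β} {L S : ℝ} (hL : 0 ≤ L)
    (hS : 0 ≤ S) (hlip : ∀ y z, ‖G y - G z‖ ≤ L * ‖y - z‖) (x : PiLp 2 β) (y : ι → PiLp 2 β)
    (hy : ∀ i, ‖x - y i‖ ≤ S) :
    ‖G x - WithLp.toLp 2 (fun i => G (y i) i)‖ ≤ √(Fintype.card ι) * (L * S) := by
  refine PiLp.norm_le_sqrt_card_mul (by positivity) _ fun i => ?_
  calc ‖(G x - WithLp.toLp 2 (fun i => G (y i) i)) i‖ = ‖(G x - G (y i)) i‖ := by simp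
    _ ≤ ‖G x - G (y i)‖ := PiLp.norm_apply_le _ i
    _ ≤ L * ‖x - y i‖ := hlip _ _
    _ ≤ L * S := by gcongr; exact hy i

theorem PiLp.norm_sub_le_sum_norm_sub_of_delay {ι : Type*} [Fintype ι] {β : ι → Type*}
    [∀ i, SeminormedAddCommGroup (β i)] (X : ℕ → PiLp 2 β) (Y : PiLp 2 β) (σ : ι → ℕ)
    {a b : ℕ} (ha : ∀ j, a ≤ σ j) (hb : ∀ j, σ j ≤ b) (hY : ∀ j, Y j = X (σ j) j) :
    ‖X b - Y‖ ≤ ∑ k ∈ Finset.Ico a b, ‖X (k + 1) - X k‖ := by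
  classical
  -- the increments of the blocks `j` with `σ j ≤ k`; summed over `k` they telescope to `X b - Y`
  let V : ℕ → PiLp 2 β := fun k =>
    WithLp.toLp 2 (fun j => if σ j ≤ k then (X (k + 1) - X k) j else 0)
  have hV : ∑ k ∈ Finset.Ico a b, V k = X b - Y := by
    ext j
    rw [WithLp.ofLp_sum, Finset.sum_apply]
    simp only [V]
    rw [← Finset.sum_filter, Finset.Ico_filter_le, max_eq_right (ha j)]
    simp only [PiLp.sub_apply]
    rw [Finset.sum_Ico_sub (fun k => X k j) (hb j), hY]
  rw [← hV]
  refine (norm_sum_le _ _).trans (Finset.sum_le_sum fun k _ => ?_)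
  rw [PiLp.norm_eq_of_L2, PiLp.norm_eq_of_L2]
  gcongr with j
  simp only [V]
  split_ifs <;> simp

theorem mul_sum_le_card_mul_sq_add_sum_sq {ι : Type*} (K : Finset ι) (u : ℝ) (a : ι → ℝ) :
    u * ∑ k ∈ K, a k ≤ (K.card * u ^ 2 + ∑ k ∈ K, a k ^ 2) / 2 := by
  rw [Finset.mul_sum, ← nsmul_eq_mul, ← Finset.sum_const, ← Finset.sum_add_distrib,
    Finset.sum_div]
  exact Finset.sum_le_sum fun k _ => by linarith [two_mul_le_add_sq u (a k)]

theorem EReal.coe_add_add_coe_le {f₀ f₁ c e B : ℝ} {A₀ A₁ : EReal} (hA : A₁ + B ≤ A₀)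
    (hf : f₁ + c ≤ f₀ + e + B) : (f₁ : EReal) + A₁ + c ≤ f₀ + A₀ + e :=
  calc (f₁ : EReal) + A₁ + c = ((f₁ + c : ℝ) : EReal) + A₁ := by
        rw [EReal.coe_add, add_right_comm]
    _ ≤ ((f₀ + e + B : ℝ) : EReal) + A₁ := by gcongr
    _ = (f₀ : EReal) + e + (A₁ + B) := by push_cast; abel
    _ ≤ (f₀ : EReal) + e + A₀ := by gcongr
    _ = f₀ + A₀ + e := by abel

theorem stmt_5_general
    (p s : ℕ) (d : Fin p → ℕ)
    (τ : Fin p → Fin p → ℕ → ℕ)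
    (hτ_le : ∀ i j t, τ i j t ≤ t)
    (hτ_ge : ∀ i j t, t ≤ τ i j t + s)
    (x : (i : Fin p) → ℕ → EuclideanSpace ℝ (Fin (d i)))
    (X : ℕ → EE p d) (hX : ∀ t i, X t i = x i t)
    (Xl : Fin p → ℕ → EE p d) (hXl : ∀ i t j, Xl i t j = x j (τ i j t))
    (T : Fin p → Set ℕ)
    (η L : ℝ) (hη : 0 < η) (hL : 0 < L)
    (f : EE p d → ℝ) (f' : EE p d → EE p d)
    (hf : ∀ y, HasGradientAt f (f' y) y)
    (hlip : ∀ y z, ‖f' y - f' z‖ ≤ L * ‖y - z‖)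
    (g : (i : Fin p) → EuclideanSpace ℝ (Fin (d i)) → EReal)
    (F : EE p d → EReal)
    (hF : ∀ y, F y = (f y : EReal) + ∑ i, g i (y i))
    (hskip : ∀ i t, t ∉ T i → x i (t + 1) = x i t)
    (hupd : ∀ i t, t ∈ T i → ∀ z : EuclideanSpace ℝ (Fin (d i)),
      g i (x i (t + 1)) +
        ((1 / (2 * η) * ‖x i (t + 1) - (x i t - η • f' (Xl i t) i)‖ ^ 2 : ℝ) : EReal)
      ≤ g i z + ((1 / (2 * η) * ‖z - (x i t - η • f' (Xl i t) i)‖ ^ 2 : ℝ) : EReal))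
    :
    ∀ t : ℕ,
      F (X (t + 1)) +
        ((1 / 2 * (1 / η - L - Real.sqrt p * L * s) * ‖X (t + 1) - X t‖ ^ 2 : ℝ) : EReal)
      ≤ F (X t) +
        ((Real.sqrt p * L / 2 *
            ∑ k ∈ Finset.Ico (t - s) t, ‖X (k + 1) - X k‖ ^ 2 : ℝ) : EReal) := by
  intro t
  set v := X (t + 1) - X t
  set W : EE p d := WithLp.toLp 2 (fun i => f' (Xl i t) i)
  set S := ∑ k ∈ Finset.Ico (t - s) t, ‖X (k + 1) - X k‖
  have hprox : ∑ i, g i (X (t + 1) i) + ((1 / (2 * η) * ‖v‖ ^ 2 + ⟪v, W⟫_ℝ : ℝ) : EReal)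
      ≤ ∑ i, g i (X t i) := by
    refine PiLp.sum_add_sq_norm_add_inner_le g _ _ _ W fun i => ?_
    rw [hX, hX]
    by_cases hi : t ∈ T i
    · exact prox_gradient_step_le hη (hupd i t hi)
    · simp [hskip i t hi]
  have hlag : ∀ i, ‖X t - Xl i t‖ ≤ S := fun i =>
    PiLp.norm_sub_le_sum_norm_sub_of_delay X _ (τ i · t)
      (fun j => Nat.sub_le_of_le_add (hτ_ge i j t)) (hτ_le i · t) (by simp [hX, hXl])
  have hdelay : ‖f' (X t) - W‖ ≤ √p * (L * S) := by
    simpa using PiLp.norm_sub_toLp_le_of_lipschitz hL.le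
      (Finset.sum_nonneg fun _ _ => norm_nonneg _) hlip (X t) (Xl · t) hlag
  have hyoung :
      ‖v‖ * S ≤ (s * ‖v‖ ^ 2 + ∑ k ∈ Finset.Ico (t - s) t, ‖X (k + 1) - X k‖ ^ 2) / 2 := by
    refine (mul_sum_le_card_mul_sq_add_sum_sq _ _ _).trans ?_
    gcongr
    rw [Nat.card_Ico]
    exact_mod_cast Nat.sub_le_of_le_add (by omega)
  rw [hF, hF]
  refine EReal.coe_add_add_coe_le hprox ?_
  have hdesc : f (X (t + 1)) ≤ f (X t) + ⟪f' (X t), v⟫_ℝ + L / 2 * ‖v‖ ^ 2 :=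
    le_add_inner_add_sq_of_lipschitz_gradient hf hlip (X t) (X (t + 1))
  have hinner : ⟪f' (X t), v⟫_ℝ - ⟪v, W⟫_ℝ ≤ √p * (L * S) * ‖v‖ := by
    rw [real_inner_comm W v, ← inner_sub_left]
    exact (real_inner_le_norm _ _).trans (by gcongr)
  have hpL : 0 ≤ √p * L := by positivity
  linear_combination hdesc + hinner + mul_le_mul_of_nonneg_left hyoung hpL

theorem stmt_5
    (p s : ℕ) (hp : 1 ≤ p) (d : Fin p → ℕ) (hd : ∀ i, 1 ≤ d i)
    (τ : Fin p → Fin p → ℕ → ℕ)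
    (hτ_le : ∀ i j t, τ i j t ≤ t)
    (hτ_ge : ∀ i j t, t ≤ τ i j t + s)
    (hτ_self : ∀ i t, τ i i t = t)
    (x : (i : Fin p) → ℕ → EuclideanSpace ℝ (Fin (d i)))
    (X : ℕ → EE p d) (hX : ∀ t i, X t i = x i t)
    (Xl : Fin p → ℕ → EE p d) (hXl : ∀ i t j, Xl i t j = x j (τ i j t))
    (T : Fin p → Set ℕ)
    (hT : ∀ i t, ∃ k ∈ T i, t ≤ k ∧ k ≤ t + s)
    (η L : ℝ) (hη : 0 < η) (hL : 0 < L)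
    (f : EE p d → ℝ) (f' : EE p d → EE p d)
    (hf : ∀ y, HasGradientAt f (f' y) y)
    (hlip : ∀ y z, ‖f' y - f' z‖ ≤ L * ‖y - z‖)
    (g : (i : Fin p) → EuclideanSpace ℝ (Fin (d i)) → EReal)
    (hg_nebot : ∀ i z, g i z ≠ ⊥)
    (hg_proper : ∀ i, ∃ z, g i z ≠ ⊤)
    (hg_lsc : ∀ i, LowerSemicontinuous (g i))
    (F : EE p d → EReal)
    (hF : ∀ y, F y = (f y : EReal) + ∑ i, g i (y i))
    (hF_bdd : ∃ m : ℝ, ∀ y, (m : EReal) ≤ F y)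
    (hF0 : F (X 0) < ⊤)
    (hskip : ∀ i t, t ∉ T i → x i (t + 1) = x i t)
    (hupd : ∀ i t, t ∈ T i → ∀ z : EuclideanSpace ℝ (Fin (d i)),
      g i (x i (t + 1)) +
        ((1 / (2 * η) * ‖x i (t + 1) - (x i t - η • f' (Xl i t) i)‖ ^ 2 : ℝ) : EReal)
      ≤ g i z + ((1 / (2 * η) * ‖z - (x i t - η • f' (Xl i t) i)‖ ^ 2 : ℝ) : EReal))
    :
    ∀ t : ℕ,
      F (X (t + 1)) +
        ((1 / 2 * (1 / η - L - Real.sqrt p * L * s) * ‖X (t + 1) - X t‖ ^ 2 : ℝ) : EReal)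
      ≤ F (X t) +
        ((Real.sqrt p * L / 2 *
            ∑ k ∈ Finset.Ico (t - s) t, ‖X (k + 1) - X k‖ ^ 2 : ℝ) : EReal) :=
  stmt_5_general p s d τ hτ_le hτ_ge x X hX Xl hXl T η L hη hL f f' hf hlip g F hF hskip hupd
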